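/- arXiv:1910.13385 — 6 statements merged into one kernel-verified Lean document; each statement's English description precedes it below -/
import Mathlib

section
/- The well-mixed identity-expression game admits an exact potential function. Precisely: define Φ(X) = −∑_{i=1}^N [ ((N−1)/N)·‖x_i − x̄‖² + (λ/2)·n_i(X) ]. Then for any strategy profile X, any player i, and any alternative strategy x'_i for player i, letting X' be the profile obtained from X by replacing x_i with x'_i (all other players unchanged), we have Φ(X') − Φ(X) = u_i(X') − u_i(X). -/
open Finset

/-- Squared Euclidean norm of a real vector. -/
noncomputable def sqnorm {d : ℕ} (v : Fin d → ℝ) : ℝ := ∑ k, (v k) ^ 2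

/-- Population mean of the strategy profile `X`, computed coordinatewise in ℝ. -/
noncomputable def mean {N d : ℕ} (X : Fin N → Fin d → ℤ) : Fin d → ℝ :=
  fun k => (∑ j, (X j k : ℝ)) / N

/-- `nSame X i` is the number of players `j ≠ i` with exactly the same strategy as `i`. -/
def nSame {N d : ℕ} (X : Fin N → Fin d → ℤ) (i : Fin N) : ℕ :=
  (univ.filter (fun j => j ≠ i ∧ X j = X i)).card

/-- Well-mixed utility: `u_i(X) = -‖x_i - x̄‖² - λ n_i(X)`. -/
noncomputable def wmUtility {N d : ℕ} (lam : ℝ) (X : Fin N → Fin d → ℤ) (i : Fin N) : ℝ :=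
  - sqnorm (fun k => (X i k : ℝ) - mean X k) - lam * nSame X i

/-- The candidate exact potential function
`Φ(X) = -∑ i ((N-1)/N ‖x_i - x̄‖² + (λ/2) n_i(X))`. -/
noncomputable def Phi {N d : ℕ} (lam : ℝ) (X : Fin N → Fin d → ℤ) : ℝ :=
  - ∑ i, (((N : ℝ) - 1) / N * sqnorm (fun k => (X i k : ℝ) - mean X k)
      + lam / 2 * nSame X i)

/- ### Auxiliary lemmas -/

lemma sum_upd {N d : ℕ} (X : Fin N → Fin d → ℤ) (i : Fin N) (x' : Fin d → ℤ)
    (g : (Fin d → ℤ) → ℝ) :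
    ∑ j, g (Function.update X i x' j) = ∑ j, g (X j) - g (X i) + g x' := by
  rw [← Finset.add_sum_erase _ (fun j => g (Function.update X i x' j)) (mem_univ i),
      ← Finset.add_sum_erase _ (fun j => g (X j)) (mem_univ i)]
  simp only [Function.update_self]
  rw [Finset.sum_congr rfl (fun j hj => by
    rw [Function.update_of_ne (Finset.ne_of_mem_erase hj)])]
  ring

lemma var_id (N : ℕ) (hN : (N:ℝ) ≠ 0) (y : Fin N → ℝ) :
    ∑ j, (y j - (∑ l, y l)/N)^2 = ∑ j, (y j)^2 - (∑ l, y l)^2/N := by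
  rw [Finset.sum_congr rfl (fun j _ => show (y j - (∑ l, y l)/N)^2
    = (y j)^2 - 2*((∑ l, y l)/N)*(y j) + ((∑ l, y l)/N)^2 by ring)]
  rw [Finset.sum_add_distrib, Finset.sum_sub_distrib, ← Finset.mul_sum,
    Finset.sum_const, Finset.card_univ, Fintype.card_fin, nsmul_eq_mul]
  field_simp
  ring

lemma nSame_cast {N d : ℕ} (X : Fin N → Fin d → ℤ) (i : Fin N) :
    (nSame X i : ℝ) = ∑ j, if j ≠ i ∧ X j = X i then (1:ℝ) else 0 := by
  unfold nSame
  rw [Finset.card_filter]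
  push_cast
  rfl

lemma decomp {N d : ℕ} (X : Fin N → Fin d → ℤ) (i : Fin N) :
    ∑ j, (nSame X j : ℝ) = 2*(nSame X i : ℝ)
      + ∑ j ∈ univ.erase i, ∑ k ∈ univ.erase i,
          (if k ≠ j ∧ X k = X j then (1:ℝ) else 0) := by
  rw [Finset.sum_congr rfl (fun j _ => nSame_cast X j)]
  rw [← Finset.add_sum_erase _ (fun j => ∑ k, if k ≠ j ∧ X k = X j then (1:ℝ) else 0)
      (mem_univ i)]
  rw [Finset.sum_congr rfl (fun j (hj : j ∈ univ.erase i) =>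
    (Finset.add_sum_erase univ (fun k => if k ≠ j ∧ X k = X j then (1:ℝ) else 0)
      (mem_univ i)).symm)]
  rw [Finset.sum_add_distrib]
  have h2 : ∑ j ∈ univ.erase i, (if i ≠ j ∧ X i = X j then (1:ℝ) else 0)
      = (nSame X i : ℝ) := by
    rw [nSame_cast, ← Finset.add_sum_erase _ (fun j => if j ≠ i ∧ X j = X i then (1:ℝ) else 0)
      (mem_univ i)]
    simp only [ne_eq, not_true_eq_false, false_and, if_false, zero_add]
    apply Finset.sum_congr rfl
    intro j hj
    have hji : j ≠ i := Finset.ne_of_mem_erase hj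
    by_cases h : X i = X j
    · rw [if_pos ⟨Ne.symm hji, h⟩, if_pos ⟨hji, h.symm⟩]
    · rw [if_neg (fun hc => h hc.2), if_neg (fun hc => h hc.2.symm)]
  rw [h2, ← nSame_cast]
  ring

lemma count_diff {N d : ℕ} (X : Fin N → Fin d → ℤ) (i : Fin N) (x' : Fin d → ℤ) :
    (∑ j, (nSame (Function.update X i x') j : ℝ)) - ∑ j, (nSame X j : ℝ)
      = 2*(nSame (Function.update X i x') i : ℝ) - 2*(nSame X i : ℝ) := by
  rw [decomp (Function.update X i x') i, decomp X i]
  have : ∑ j ∈ univ.erase i, ∑ k ∈ univ.erase i,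
        (if k ≠ j ∧ Function.update X i x' k = Function.update X i x' j then (1:ℝ) else 0)
      = ∑ j ∈ univ.erase i, ∑ k ∈ univ.erase i,
        (if k ≠ j ∧ X k = X j then (1:ℝ) else 0) := by
    apply Finset.sum_congr rfl
    intro j hj
    apply Finset.sum_congr rfl
    intro k hk
    rw [Function.update_of_ne (Finset.ne_of_mem_erase hk),
        Function.update_of_ne (Finset.ne_of_mem_erase hj)]
  rw [this]
  ring

lemma norm_diff {N d : ℕ} (hNne : (N:ℝ) ≠ 0) (X : Fin N → Fin d → ℤ) (i : Fin N)
    (x' : Fin d → ℤ) :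
    ((N:ℝ)-1)/N * (∑ j, sqnorm (fun k => (Function.update X i x' j k : ℝ)
          - mean (Function.update X i x') k))
      - ((N:ℝ)-1)/N * (∑ j, sqnorm (fun k => (X j k : ℝ) - mean X k))
      = sqnorm (fun k => (x' k : ℝ) - mean (Function.update X i x') k)
        - sqnorm (fun k => (X i k : ℝ) - mean X k) := by
  have swap : ∀ Y : Fin N → Fin d → ℤ,
      ∑ j, sqnorm (fun k => (Y j k : ℝ) - mean Y k)
        = ∑ k, ∑ j, ((Y j k : ℝ) - (∑ l, (Y l k : ℝ))/N)^2 := by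
    intro Y
    unfold sqnorm mean
    exact Finset.sum_comm
  rw [swap, swap, ← mul_sub, ← Finset.sum_sub_distrib, Finset.mul_sum]
  unfold sqnorm mean
  rw [← Finset.sum_sub_distrib]
  apply Finset.sum_congr rfl
  intro k _
  have hs : (∑ l, (Function.update X i x' l k : ℝ))
      = (∑ l, (X l k : ℝ)) - (X i k : ℝ) + (x' k : ℝ) :=
    sum_upd X i x' (fun v => (v k : ℝ))
  have hsq : (∑ l, ((Function.update X i x' l k : ℝ))^2)
      = (∑ l, ((X l k : ℝ))^2) - ((X i k : ℝ))^2 + ((x' k : ℝ))^2 :=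
    sum_upd X i x' (fun v => ((v k : ℝ))^2)
  rw [var_id N hNne (fun l => (Function.update X i x' l k : ℝ)),
      var_id N hNne (fun l => (X l k : ℝ))]
  simp only
  rw [hs, hsq]
  set a : ℝ := (X i k : ℝ)
  set b : ℝ := (x' k : ℝ)
  set s : ℝ := ∑ l, (X l k : ℝ)
  field_simp
  ring

/-- `Φ` is an exact potential for the well-mixed identity-expression game. -/
theorem exact_potential {N d : ℕ} (hN : 2 ≤ N) (lam : ℝ) (hlam : 0 < lam)
    (X : Fin N → Fin d → ℤ) (i : Fin N) (x' : Fin d → ℤ) :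
    Phi lam (Function.update X i x') - Phi lam X
      = wmUtility lam (Function.update X i x') i - wmUtility lam X i := by
  have hNne : (N:ℝ) ≠ 0 := Nat.cast_ne_zero.mpr (by omega)
  have hQ := norm_diff hNne X i x'
  have hC := count_diff X i x'
  have hupd : (fun k => ((Function.update X i x' i k : ℤ) : ℝ)
        - mean (Function.update X i x') k)
      = fun k => ((x' k : ℝ) - mean (Function.update X i x') k) := by
    funext k
    rw [Function.update_self]
  unfold Phi wmUtility
  rw [hupd]
  rw [Finset.sum_add_distrib, Finset.sum_add_distrib, ← Finset.mul_sum, ← Finset.mul_sum,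
      ← Finset.mul_sum, ← Finset.mul_sum]
  linear_combination (-1 : ℝ) * hQ - lam/2 * hC
end

section
/- In the well-mixed identity-expression game with finite strategy sets, a pure strategy Nash equilibrium exists: there is a profile X* ∈ ({a,…,b}^d)^N such that for every player i and every alternative strategy x'_i ∈ {a,…,b}^d, u_i(X*) ≥ u_i(X' ) where X' is obtained from X* by replacing x*_i with x'_i. In particular, any profile maximizing the potential Φ(X) = −∑_{i=1}^N [ ((N−1)/N)·‖x_i − x̄‖² + (λ/2)·n_i(X) ] over all profiles is such a Nash equilibrium. -/
/-!
`Φ` is an exact potential: when player `i` alone deviates, `Φ` changes by exactly the change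
in `u_i`. For the dispersion term this follows from `∑ⱼ (yⱼ - ȳ)² = ∑ⱼ yⱼ² - (∑ⱼ yⱼ)² / N`,
which makes the factor `(N - 1) / N` convert the change in total dispersion into the change of
`‖x_i - x̄‖²`; for the crowding term, every coinciding pair is counted twice in `∑ⱼ nⱼ`, and
only the pairs involving `i` change. A maximizer of `Φ` over the finite nonempty set of
profiles therefore admits no profitable unilateral deviation.
-/

open Finset

/-- A strategy is feasible if each of its `d` coordinates lies in `{a..b}`. -/
def Feasible {d : ℕ} (a b : ℤ) (x : Fin d → ℤ) : Prop := ∀ k, x k ∈ Set.Icc a b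

open Function

section PotentialGame

variable {ι α : Type*} [DecidableEq ι]

def IsExactPotential (u : (ι → α) → ι → ℝ) (Φ : (ι → α) → ℝ) : Prop :=
  ∀ X i x, Φ (update X i x) - Φ X = u (update X i x) i - u X i

def IsPureNash (S : Set α) (u : (ι → α) → ι → ℝ) (X : ι → α) : Prop :=
  ∀ i, ∀ x ∈ S, u (update X i x) i ≤ u X i

variable {u : (ι → α) → ι → ℝ} {Φ : (ι → α) → ℝ} {S : Set α}

theorem IsExactPotential.isPureNash_of_isMaxOn (hΦ : IsExactPotential u Φ) {X : ι → α}
    (hX : ∀ i, X i ∈ S) (hmax : IsMaxOn Φ (Set.univ.pi fun _ => S) X) : IsPureNash S u X := by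
  intro i x hx
  have hdev : update X i x ∈ Set.univ.pi fun _ => S :=
    Set.mem_univ_pi.2 fun j => by
      rcases eq_or_ne j i with rfl | hj
      · simpa using hx
      · simpa [hj] using hX j
  linarith [hΦ X i x, isMaxOn_iff.1 hmax _ hdev]

theorem IsExactPotential.exists_isPureNash [Finite ι] (hΦ : IsExactPotential u Φ)
    (hfin : S.Finite) (hne : S.Nonempty) : ∃ X, (∀ i, X i ∈ S) ∧ IsPureNash S u X := by
  obtain ⟨X, hX, hmax⟩ := Set.exists_max_image _ Φ (Set.Finite.pi fun _ => hfin)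
    (Set.univ_pi_nonempty_iff.2 fun _ => hne)
  have hX' : ∀ i, X i ∈ S := Set.mem_univ_pi.1 hX
  exact ⟨X, hX', hΦ.isPureNash_of_isMaxOn hX' hmax⟩

end PotentialGame

theorem Finset.sum_sub_avg_sq {ι : Type*} [Fintype ι] (hn : (Fintype.card ι : ℝ) ≠ 0)
    (y : ι → ℝ) :
    ∑ j, (y j - (∑ l, y l) / Fintype.card ι) ^ 2
      = ∑ j, y j ^ 2 - (∑ l, y l) ^ 2 / Fintype.card ι := by
  simp only [sub_sq, sum_add_distrib, sum_sub_distrib, ← sum_mul, ← mul_sum, sum_const,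
    card_univ, nsmul_eq_mul]
  field_simp
  ring

theorem Finset.sum_comp_update {ι β M : Type*} [Fintype ι] [DecidableEq ι] [AddCommGroup M]
    (f : β → M) (y : ι → β) (i : ι) (t : β) :
    ∑ j, f (update y i t j) = ∑ j, f (y j) - f (y i) + f t := by
  have hupd : (fun j => f (update y i t j)) = update (f ∘ y) i (f t) :=
    funext fun j => apply_update (fun _ => f) y i t j
  rw [hupd, sum_update_of_mem (mem_univ i),
    sum_eq_add_sum_sdiff_singleton_of_mem (mem_univ i) (fun j => f (y j))]
  simp only [comp_apply]
  abel

theorem Finset.sum_sub_avg_sq_update {ι : Type*} [Fintype ι] [DecidableEq ι]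
    (hn : (Fintype.card ι : ℝ) ≠ 0) (y : ι → ℝ) (i : ι) (t : ℝ) :
    ((Fintype.card ι : ℝ) - 1) / Fintype.card ι *
        (∑ j, (update y i t j - (∑ l, update y i t l) / Fintype.card ι) ^ 2
          - ∑ j, (y j - (∑ l, y l) / Fintype.card ι) ^ 2)
      = (t - (∑ l, update y i t l) / Fintype.card ι) ^ 2
          - (y i - (∑ l, y l) / Fintype.card ι) ^ 2 := by
  have hsum : ∑ j, update y i t j = ∑ j, y j - y i + t := by
    simpa using sum_comp_update id y i t
  have hsq : ∑ j, update y i t j ^ 2 = ∑ j, y j ^ 2 - y i ^ 2 + t ^ 2 :=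
    sum_comp_update (· ^ 2) y i t
  rw [sum_sub_avg_sq hn, sum_sub_avg_sq hn, hsum, hsq]
  field_simp
  ring

theorem Finset.sum_sum_eq_two_nsmul_add_sum_sum_erase {ι M : Type*} [Fintype ι] [DecidableEq ι]
    [AddCommMonoid M] {f : ι → ι → M} (hf : ∀ j l, f j l = f l j) (i : ι) (hii : f i i = 0) :
    ∑ j, ∑ l, f j l = 2 • ∑ l, f i l + ∑ j ∈ univ.erase i, ∑ l ∈ univ.erase i, f j l := by
  have hrow : ∑ l, f i l = ∑ j ∈ univ.erase i, f i j := by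
    rw [← add_sum_erase _ _ (mem_univ i), hii, zero_add]
  calc ∑ j, ∑ l, f j l = ∑ l, f i l + ∑ j ∈ univ.erase i, ∑ l, f j l :=
        (add_sum_erase _ _ (mem_univ i)).symm
    _ = ∑ l, f i l + ∑ j ∈ univ.erase i, (f i j + ∑ l ∈ univ.erase i, f j l) := by
        congr 1
        refine sum_congr rfl fun j _ => ?_
        rw [← hf, add_sum_erase _ _ (mem_univ i)]
    _ = 2 • ∑ l, f i l + ∑ j ∈ univ.erase i, ∑ l ∈ univ.erase i, f j l := by
        rw [sum_add_distrib, ← hrow, two_nsmul, add_assoc]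

section WellMixedGame

variable {N d : ℕ}

theorem sum_sqnorm_sub_mean_update (X : Fin N → Fin d → ℤ) (i : Fin N) (x : Fin d → ℤ) :
    ((N : ℝ) - 1) / N *
        (∑ j, sqnorm (fun k => (update X i x j k : ℝ) - mean (update X i x) k)
          - ∑ j, sqnorm (fun k => (X j k : ℝ) - mean X k))
      = sqnorm (fun k => (x k : ℝ) - mean (update X i x) k)
          - sqnorm (fun k => (X i k : ℝ) - mean X k) := by
  have hN : (Fintype.card (Fin N) : ℝ) ≠ 0 := by simpa using i.pos.ne'
  simp only [sqnorm, mean]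
  rw [sum_comm, sum_comm (γ := Fin N), ← sum_sub_distrib, ← sum_sub_distrib, mul_sum]
  refine sum_congr rfl fun k _ => ?_
  have hcol : (fun j => (update X i x j k : ℝ)) = update (fun j => (X j k : ℝ)) i (x k) :=
    funext fun j => apply_update (fun _ v => (v k : ℝ)) X i x j
  have := sum_sub_avg_sq_update hN (fun j => (X j k : ℝ)) i (x k)
  rw [← hcol, Fintype.card_fin] at this
  exact this

theorem nSame_eq_sum (X : Fin N → Fin d → ℤ) (j : Fin N) :
    nSame X j = ∑ l, if l ≠ j ∧ X l = X j then 1 else 0 :=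
  card_filter _ _

theorem sum_nSame_eq (X : Fin N → Fin d → ℤ) (i : Fin N) :
    ∑ j, nSame X j = 2 * nSame X i
      + ∑ j ∈ univ.erase i, ∑ l ∈ univ.erase i, if l ≠ j ∧ X l = X j then 1 else 0 := by
  simp only [nSame_eq_sum]
  refine sum_sum_eq_two_nsmul_add_sum_sum_erase (fun j l => ?_) i (by simp)
  simp only [ne_comm, eq_comm]

theorem sum_nSame_update (X : Fin N → Fin d → ℤ) (i : Fin N) (x : Fin d → ℤ) :
    ∑ j, nSame (update X i x) j + 2 * nSame X i
      = ∑ j, nSame X j + 2 * nSame (update X i x) i := by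
  have htail : ∀ j ∈ univ.erase i, ∀ l ∈ univ.erase i,
      (if l ≠ j ∧ update X i x l = update X i x j then 1 else 0)
        = if l ≠ j ∧ X l = X j then 1 else 0 := by
    intro j hj l hl
    rw [update_of_ne (ne_of_mem_erase hj), update_of_ne (ne_of_mem_erase hl)]
  rw [sum_nSame_eq (update X i x) i, sum_nSame_eq X i,
    sum_congr rfl fun j hj => sum_congr rfl (htail j hj)]
  ring

theorem isExactPotential_Phi (lam : ℝ) :
    IsExactPotential (wmUtility (N := N) (d := d) lam) (Phi lam) := by
  intro X i x
  have hquad := sum_sqnorm_sub_mean_update X i x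
  have hcount : ∑ j, (nSame (update X i x) j : ℝ) + 2 * nSame X i
      = ∑ j, (nSame X j : ℝ) + 2 * nSame (update X i x) i := by
    exact_mod_cast sum_nSame_update X i x
  simp only [Phi, wmUtility, sum_add_distrib, ← mul_sum, update_self]
  linear_combination -hquad - lam / 2 * hcount

end WellMixedGame

theorem exists_pure_nash_general {N d : ℕ} (a b : ℤ) (hab : a ≤ b)
    (lam : ℝ) :
    (∃ X : Fin N → Fin d → ℤ, (∀ i, Feasible a b (X i)) ∧
      ∀ i (x' : Fin d → ℤ), Feasible a b x' →
        wmUtility lam (Function.update X i x') i ≤ wmUtility lam X i) ∧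
    (∀ X : Fin N → Fin d → ℤ, (∀ i, Feasible a b (X i)) →
      (∀ Y : Fin N → Fin d → ℤ, (∀ i, Feasible a b (Y i)) → Phi lam Y ≤ Phi lam X) →
      ∀ i (x' : Fin d → ℤ), Feasible a b x' →
        wmUtility lam (Function.update X i x') i ≤ wmUtility lam X i) := by
  have hfin : {x : Fin d → ℤ | Feasible a b x}.Finite :=
    (Set.Finite.pi fun _ => Set.finite_Icc a b).subset fun x hx k _ => hx k
  have hne : {x : Fin d → ℤ | Feasible a b x}.Nonempty := ⟨fun _ => a, fun _ => ⟨le_rfl, hab⟩⟩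
  exact ⟨(isExactPotential_Phi lam).exists_isPureNash hfin hne, fun X hX hmax =>
    (isExactPotential_Phi lam).isPureNash_of_isMaxOn hX fun Y hY => hmax Y (Set.mem_univ_pi.1 hY)⟩

/-- In the well-mixed game with finite strategy sets `{a..b}^d`, a pure strategy Nash
equilibrium exists; moreover, any feasible profile maximizing the potential `Φ` over
feasible profiles is such a Nash equilibrium. -/
theorem exists_pure_nash {N d : ℕ} (hN : 2 ≤ N) (a b : ℤ) (hab : a ≤ b)
    (lam : ℝ) (hlam : 0 < lam) :
    (∃ X : Fin N → Fin d → ℤ, (∀ i, Feasible a b (X i)) ∧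
      ∀ i (x' : Fin d → ℤ), Feasible a b x' →
        wmUtility lam (Function.update X i x') i ≤ wmUtility lam X i) ∧
    (∀ X : Fin N → Fin d → ℤ, (∀ i, Feasible a b (X i)) →
      (∀ Y : Fin N → Fin d → ℤ, (∀ i, Feasible a b (Y i)) → Phi lam Y ≤ Phi lam X) →
      ∀ i (x' : Fin d → ℤ), Feasible a b x' →
        wmUtility lam (Function.update X i x') i ≤ wmUtility lam X i) :=
  exists_pure_nash_general a b hab lam
end

section
/- (Theorem 1, finite-improvement form.) In the well-mixed identity-expression game with finite strategy sets, every better-reply improvement path is finite: there is no infinite sequence of strategy profiles X^(0), X^(1), X^(2), … in ({a,…,b}^d)^N such that for every t, X^(t+1) differs from X^(t) in the strategy of exactly one player i_t and u_{i_t}(X^(t+1)) > u_{i_t}(X^(t)). Consequently every maximal better-reply improvement path terminates at a pure strategy Nash equilibrium. -/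
open Finset

/- ------------------ auxiliary development: exact potential ------------------ -/

/-- Sum over ordered pairs of squared distances. -/
noncomputable def pairNorm {N d : ℕ} (X : Fin N → Fin d → ℤ) : ℝ :=
  ∑ j, ∑ k, sqnorm (fun c => (X j c : ℝ) - (X k c : ℝ))

/-- Number (as a real) of ordered pairs of distinct players with equal strategies. -/
noncomputable def pairSame {N d : ℕ} (X : Fin N → Fin d → ℤ) : ℝ :=
  ∑ j, ∑ k, (if j ≠ k ∧ X j = X k then (1:ℝ) else 0)

/-- The exact potential of the well-mixed game. -/
noncomputable def pot {N d : ℕ} (lam : ℝ) (X : Fin N → Fin d → ℤ) : ℝ :=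
  -(((N:ℝ)-1)/(N:ℝ)^2 / 2) * pairNorm X - (lam/2) * pairSame X

lemma scalar_key (n y y' s : ℝ) (hn : n ≠ 0) :
    (y' - (y' + s)/n)^2 - (y - (y + s)/n)^2
      = (n-1)/n^2 * ((n-1)*(y'^2 - y^2) - 2*(y'-y)*s) := by
  field_simp
  ring

lemma split_sum {N : ℕ} (F : Fin N → Fin N → ℝ) (i : Fin N) :
    ∑ j, ∑ k, F j k
      = F i i + ∑ k ∈ univ.erase i, F i k + ∑ j ∈ univ.erase i, F j i
        + ∑ j ∈ univ.erase i, ∑ k ∈ univ.erase i, F j k := by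
  rw [← Finset.add_sum_erase univ (fun j => ∑ k, F j k) (mem_univ i),
      ← Finset.add_sum_erase univ (F i) (mem_univ i)]
  have h : ∀ j ∈ univ.erase i, ∑ k, F j k = F j i + ∑ k ∈ univ.erase i, F j k := fun j _ =>
    (Finset.add_sum_erase univ (F j) (mem_univ i)).symm
  rw [Finset.sum_congr rfl h, Finset.sum_add_distrib]
  ring

lemma pot_diff {N d : ℕ} (hN : 2 ≤ N) (lam : ℝ) (X : Fin N → Fin d → ℤ) (i : Fin N)
    (x' : Fin d → ℤ) :
    pot lam (Function.update X i x') - pot lam X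
      = wmUtility lam (Function.update X i x') i - wmUtility lam X i := by
  set X' := Function.update X i x' with hX'def
  have hXj' : ∀ j ∈ univ.erase i, X' j = X j := fun j hj =>
    Function.update_of_ne (Finset.ne_of_mem_erase hj) x' X
  have hN0 : (N:ℝ) ≠ 0 := by
    have : 0 < N := by omega
    exact_mod_cast this.ne'
  have hcard : ((univ.erase i).card : ℝ) = (N:ℝ) - 1 := by
    rw [Finset.card_erase_of_mem (mem_univ i), Finset.card_univ, Fintype.card_fin,
      Nat.cast_sub (by omega : 1 ≤ N), Nat.cast_one]
  -- means
  have hmean : ∀ (Y : Fin N → Fin d → ℤ) (c : Fin d),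
      mean Y c = ((Y i c : ℝ) + ∑ k ∈ univ.erase i, (Y k c : ℝ)) / N := by
    intro Y c
    rw [mean, ← Finset.add_sum_erase univ (fun j => (Y j c : ℝ)) (mem_univ i)]
  have hmean' : ∀ c, mean X' c = ((X' i c : ℝ) + ∑ k ∈ univ.erase i, (X k c : ℝ)) / N := by
    intro c
    rw [hmean X' c]
    congr 2
    exact Finset.sum_congr rfl fun k hk => by rw [hXj' k hk]
  -- per-coordinate key identity
  have key : ∀ c : Fin d, ((X' i c : ℝ) - mean X' c)^2 - ((X i c : ℝ) - mean X c)^2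
      = ((N:ℝ)-1)/(N:ℝ)^2 *
        (∑ k ∈ univ.erase i, ((X' i c : ℝ) - (X k c : ℝ))^2
          - ∑ k ∈ univ.erase i, ((X i c : ℝ) - (X k c : ℝ))^2) := by
    intro c
    have hsum : ∑ k ∈ univ.erase i, ((X' i c : ℝ) - (X k c : ℝ))^2
        - ∑ k ∈ univ.erase i, ((X i c : ℝ) - (X k c : ℝ))^2
        = ((N:ℝ)-1) * (((X' i c : ℝ))^2 - ((X i c : ℝ))^2)
          - 2*((X' i c : ℝ) - (X i c : ℝ)) * ∑ k ∈ univ.erase i, (X k c : ℝ) := by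
      rw [← Finset.sum_sub_distrib]
      have hterm : ∀ k ∈ univ.erase i,
          ((X' i c : ℝ) - (X k c : ℝ))^2 - ((X i c : ℝ) - (X k c : ℝ))^2
            = (((X' i c : ℝ))^2 - ((X i c : ℝ))^2)
              - 2*((X' i c : ℝ) - (X i c : ℝ)) * (X k c : ℝ) := by
        intro k _; ring
      rw [Finset.sum_congr rfl hterm, Finset.sum_sub_distrib, Finset.sum_const,
        nsmul_eq_mul, hcard, ← Finset.mul_sum]
    rw [hsum, hmean' c, hmean X c]
    exact scalar_key (N:ℝ) (X i c : ℝ) (X' i c : ℝ) _ hN0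
  -- squared-distance-to-mean difference
  have hnormdiff : sqnorm (fun c => (X' i c : ℝ) - mean X' c)
      - sqnorm (fun c => (X i c : ℝ) - mean X c)
      = ((N:ℝ)-1)/(N:ℝ)^2 *
        (∑ k ∈ univ.erase i, sqnorm (fun c => (X' i c : ℝ) - (X k c : ℝ))
          - ∑ k ∈ univ.erase i, sqnorm (fun c => (X i c : ℝ) - (X k c : ℝ))) := by
    simp only [sqnorm]
    rw [← Finset.sum_sub_distrib, Finset.sum_congr rfl (fun c _ => key c), ← Finset.mul_sum,
      Finset.sum_sub_distrib]
    congr 2 <;> exact Finset.sum_comm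
  -- pairNorm split
  have hPN : ∀ Y : Fin N → Fin d → ℤ, pairNorm Y
      = 2 * ∑ k ∈ univ.erase i, sqnorm (fun c => (Y i c : ℝ) - (Y k c : ℝ))
        + ∑ j ∈ univ.erase i, ∑ k ∈ univ.erase i,
            sqnorm (fun c => (Y j c : ℝ) - (Y k c : ℝ)) := by
    intro Y
    rw [pairNorm, split_sum (fun j k => sqnorm fun c => (Y j c : ℝ) - (Y k c : ℝ)) i]
    have h0 : sqnorm (fun c => (Y i c : ℝ) - (Y i c : ℝ)) = 0 := by simp [sqnorm]
    have hsymm : ∀ j ∈ univ.erase i, sqnorm (fun c => (Y j c : ℝ) - (Y i c : ℝ))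
        = sqnorm (fun c => (Y i c : ℝ) - (Y j c : ℝ)) := by
      intro j _
      unfold sqnorm
      exact Finset.sum_congr rfl fun c _ => by ring
    rw [h0, Finset.sum_congr rfl hsymm]
    ring
  have hPNdiff : pairNorm X' - pairNorm X
      = 2 * (∑ k ∈ univ.erase i, sqnorm (fun c => (X' i c : ℝ) - (X k c : ℝ))
          - ∑ k ∈ univ.erase i, sqnorm (fun c => (X i c : ℝ) - (X k c : ℝ))) := by
    rw [hPN X', hPN X]
    have h1 : ∑ k ∈ univ.erase i, sqnorm (fun c => (X' i c : ℝ) - (X' k c : ℝ))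
        = ∑ k ∈ univ.erase i, sqnorm (fun c => (X' i c : ℝ) - (X k c : ℝ)) :=
      Finset.sum_congr rfl fun k hk => by rw [hXj' k hk]
    have h2 : ∑ j ∈ univ.erase i, ∑ k ∈ univ.erase i,
          sqnorm (fun c => (X' j c : ℝ) - (X' k c : ℝ))
        = ∑ j ∈ univ.erase i, ∑ k ∈ univ.erase i,
          sqnorm (fun c => (X j c : ℝ) - (X k c : ℝ)) :=
      Finset.sum_congr rfl fun j hj => Finset.sum_congr rfl fun k hk => by
        rw [hXj' j hj, hXj' k hk]
    rw [h1, h2]; ring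
  -- pairSame split
  have hPS : ∀ Y : Fin N → Fin d → ℤ, pairSame Y
      = 2 * (nSame Y i : ℝ)
        + ∑ j ∈ univ.erase i, ∑ k ∈ univ.erase i,
            (if j ≠ k ∧ Y j = Y k then (1:ℝ) else 0) := by
    intro Y
    have hn : (nSame Y i : ℝ) = ∑ j ∈ univ.erase i, (if j ≠ i ∧ Y j = Y i then (1:ℝ) else 0) := by
      rw [nSame, Finset.card_filter]
      push_cast
      rw [← Finset.add_sum_erase univ (fun j => if j ≠ i ∧ Y j = Y i then (1:ℝ) else 0)
        (mem_univ i)]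
      simp
    rw [pairSame, split_sum (fun j k => if j ≠ k ∧ Y j = Y k then (1:ℝ) else 0) i]
    have h0 : (if i ≠ i ∧ Y i = Y i then (1:ℝ) else 0) = 0 := by simp
    have hsymm : ∀ k ∈ univ.erase i, (if i ≠ k ∧ Y i = Y k then (1:ℝ) else 0)
        = (if k ≠ i ∧ Y k = Y i then (1:ℝ) else 0) := by
      intro k _
      have hiff : (i ≠ k ∧ Y i = Y k) ↔ (k ≠ i ∧ Y k = Y i) := by
        constructor <;> rintro ⟨h1, h2⟩ <;> exact ⟨h1.symm, h2.symm⟩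
      rw [if_congr hiff rfl rfl]
    rw [h0, Finset.sum_congr rfl hsymm, ← hn]
    ring
  have hPSdiff : pairSame X' - pairSame X = 2 * ((nSame X' i : ℝ) - (nSame X i : ℝ)) := by
    rw [hPS X', hPS X]
    have h2 : ∑ j ∈ univ.erase i, ∑ k ∈ univ.erase i,
          (if j ≠ k ∧ X' j = X' k then (1:ℝ) else 0)
        = ∑ j ∈ univ.erase i, ∑ k ∈ univ.erase i,
          (if j ≠ k ∧ X j = X k then (1:ℝ) else 0) :=
      Finset.sum_congr rfl fun j hj => Finset.sum_congr rfl fun k hk => by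
        rw [hXj' j hj, hXj' k hk]
    rw [h2]; ring
  -- assemble
  simp only [pot, wmUtility]
  linear_combination (-(((N:ℝ)-1)/(N:ℝ)^2/2)) * hPNdiff - (lam/2) * hPSdiff + hnormdiff

/-- Theorem 1 (finite improvement property): in the well-mixed game with finite strategy
sets there is no infinite better-reply improvement path, and consequently every maximal
better-reply improvement path terminates at a pure strategy Nash equilibrium. -/
theorem no_infinite_improvement_path {N d : ℕ} (hN : 2 ≤ N) (a b : ℤ) (hab : a ≤ b)
    (lam : ℝ) (hlam : 0 < lam) :
    (¬ ∃ Xs : ℕ → Fin N → Fin d → ℤ,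
      (∀ t i, Feasible a b (Xs t i)) ∧
      ∀ t, ∃ i : Fin N,
        Xs (t + 1) = Function.update (Xs t) i (Xs (t + 1) i) ∧
        Xs (t + 1) i ≠ Xs t i ∧
        wmUtility lam (Xs t) i < wmUtility lam (Xs (t + 1)) i) ∧
    (∀ X : Fin N → Fin d → ℤ, (∀ i, Feasible a b (X i)) →
      -- if no better-reply improvement step is available from `X`
      -- (i.e. a maximal improvement path terminates at `X`), then `X` is a
      -- pure strategy Nash equilibrium
      (¬ ∃ (i : Fin N) (x' : Fin d → ℤ), Feasible a b x' ∧
        wmUtility lam X i < wmUtility lam (Function.update X i x') i) →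
      ∀ (i : Fin N) (x' : Fin d → ℤ), Feasible a b x' →
        wmUtility lam (Function.update X i x') i ≤ wmUtility lam X i) := by
  constructor
  · rintro ⟨Xs, hfeas, hstep⟩
    have hmono : StrictMono (fun t => pot lam (Xs t)) := by
      apply strictMono_nat_of_lt_succ
      intro t
      obtain ⟨i, hupd, hne, hlt⟩ := hstep t
      have h := pot_diff hN lam (Xs t) i (Xs (t+1) i)
      rw [← hupd] at h
      show pot lam (Xs t) < pot lam (Xs (t+1))
      linarith
    have hinj : Function.Injective Xs := by
      intro s t hst
      exact hmono.injective (congrArg (pot lam) hst)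
    have hfin : (Set.range Xs).Finite := by
      have hsub : Set.range Xs ⊆ Set.pi Set.univ
          (fun _ : Fin N => Set.pi Set.univ (fun _ : Fin d => Set.Icc a b)) := by
        rintro _ ⟨t, rfl⟩
        rw [Set.mem_univ_pi]
        intro i
        rw [Set.mem_univ_pi]
        intro k
        exact hfeas t i k
      exact (Set.Finite.pi fun _ => Set.Finite.pi fun _ => Set.finite_Icc a b).subset hsub
    exact (Set.infinite_range_of_injective hinj) hfin
  · intro X hX hno i x' hx'
    by_contra h
    push_neg at h
    exact hno ⟨i, x', hx', h⟩
end

section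
/- For any strategy profile X, any player i, and any alternative strategy x'_i for player i (with X' the profile obtained by replacing x_i with x'_i and leaving all other players unchanged), the total change in the weighted conformity terms equals the change in player i's own conformity term: ∑_{j=1}^N ((N−1)/N)·( ‖x_j − x̄‖² − ‖x'_j − x̄'‖² ) = ‖x_i − x̄‖² − ‖x'_i − x̄'‖², where x̄' denotes the mean of X' and x'_j = x_j for j ≠ i. -/
open Finset

/-! The identity splits over coordinates, so it suffices to treat real numbers `a_j`.
There `∑_j (a_j - ā)² = ∑_j a_j² - (∑_j a_j)² / N`, and a deviation of player `i` changes
`∑_j a_j²` and `∑_j a_j` only through `a_i`; both sides of the identity then become the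
same rational function of `a_i`, the deviation `b` and `∑_j a_j`. -/

theorem Fintype.sum_update_eq_sum_sub_add {ι M : Type*} [Fintype ι] [DecidableEq ι]
    [AddCommGroup M] (f : ι → M) (i : ι) (b : M) :
    ∑ j, Function.update f i b j = ∑ j, f j - f i + b := by
  rw [sum_update_of_mem (mem_univ i), sum_eq_add_sum_sdiff_singleton_of_mem (mem_univ i) f]
  abel

theorem sum_sq_sub_mean {ι : Type*} [Fintype ι] (a : ι → ℝ) :
    ∑ j, (a j - (∑ l, a l) / Fintype.card ι) ^ 2
      = ∑ j, a j ^ 2 - (∑ l, a l) ^ 2 / Fintype.card ι := by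
  rcases isEmpty_or_nonempty ι with _ | _
  · simp
  have hn : (Fintype.card ι : ℝ) ≠ 0 := by positivity
  simp only [sub_sq, sum_add_distrib, sum_sub_distrib, ← sum_mul, ← mul_sum, sum_const, card_univ,
    nsmul_eq_mul]
  field_simp
  ring

theorem sum_mul_sq_sub_mean_update {ι : Type*} [Fintype ι] [DecidableEq ι]
    (a : ι → ℝ) (i : ι) (b : ℝ) :
    ∑ j, ((Fintype.card ι : ℝ) - 1) / Fintype.card ι *
        ((a j - (∑ l, a l) / Fintype.card ι) ^ 2
          - (Function.update a i b j - (∑ l, Function.update a i b l) / Fintype.card ι) ^ 2)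
    = (a i - (∑ l, a l) / Fintype.card ι) ^ 2
        - (b - (∑ l, Function.update a i b l) / Fintype.card ι) ^ 2 := by
  have hn : (Fintype.card ι : ℝ) ≠ 0 := by
    have : Nonempty ι := ⟨i⟩
    positivity
  have hsq : (fun j => Function.update a i b j ^ 2)
      = Function.update (fun j => a j ^ 2) i (b ^ 2) :=
    funext (Function.apply_update (fun _ v => v ^ 2) a i b)
  rw [← mul_sum, sum_sub_distrib, sum_sq_sub_mean, sum_sq_sub_mean, hsq,
    Fintype.sum_update_eq_sum_sub_add, Fintype.sum_update_eq_sum_sub_add]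
  field_simp
  ring

theorem total_conformity_change_general {N d : ℕ}
    (X : Fin N → Fin d → ℤ) (i : Fin N) (x' : Fin d → ℤ) :
    ∑ j, ((N : ℝ) - 1) / N *
        (sqnorm (fun k => (X j k : ℝ) - mean X k)
          - sqnorm (fun k => (Function.update X i x' j k : ℝ)
              - mean (Function.update X i x') k))
    = sqnorm (fun k => (X i k : ℝ) - mean X k)
        - sqnorm (fun k => (x' k : ℝ) - mean (Function.update X i x') k) := by
  have hcast : ∀ j k, ((Function.update X i x' j k : ℤ) : ℝ)
      = Function.update (fun j => (X j k : ℝ)) i (x' k : ℝ) j := fun j k =>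
    Function.apply_update (fun _ v => (v k : ℝ)) X i x' j
  simp only [sqnorm, mean, ← sum_sub_distrib, mul_sum, hcast]
  rw [sum_comm]
  refine sum_congr rfl fun k _ => ?_
  simpa only [Fintype.card_fin] using
    sum_mul_sq_sub_mean_update (fun j => (X j k : ℝ)) i (x' k : ℝ)

/-- Under a unilateral deviation of player `i`, the total change in the weighted
conformity terms equals the change in player `i`'s own conformity term:
`∑_j ((N-1)/N)(‖x_j - x̄‖² - ‖x'_j - x̄'‖²) = ‖x_i - x̄‖² - ‖x'_i - x̄'‖²`. -/
theorem total_conformity_change {N d : ℕ} (hN : 2 ≤ N)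
    (X : Fin N → Fin d → ℤ) (i : Fin N) (x' : Fin d → ℤ) :
    ∑ j, ((N : ℝ) - 1) / N *
        (sqnorm (fun k => (X j k : ℝ) - mean X k)
          - sqnorm (fun k => (Function.update X i x' j k : ℝ)
              - mean (Function.update X i x') k))
    = sqnorm (fun k => (X i k : ℝ) - mean X k)
        - sqnorm (fun k => (x' k : ℝ) - mean (Function.update X i x') k) :=
  total_conformity_change_general X i x'
end

section
/- (Theorem 2.) Consider the three-player network game in which player 1 observes only player 2, player 2 observes only player 3, and player 3 observes only player 1, with utilities u₁(X) = −‖x₁ − x₂‖² − λ·[x₁ = x₂], u₂(X) = −‖x₂ − x₃‖² − λ·[x₂ = x₃], u₃(X) = −‖x₃ − x₁‖² − λ·[x₃ = x₁], where strategies x₁, x₂, x₃ ∈ ℤ^d and λ > 1. Then this game has no pure strategy Nash equilibrium: for every profile (x₁, x₂, x₃) some player has a strategy that strictly increases his utility. -/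
open Finset

/-- Squared Euclidean distance between two integer vectors. -/
def sqdist {d : ℕ} (x y : Fin d → ℤ) : ℤ := ∑ k, (x k - y k) ^ 2

/-- Utility of a player who observes a single neighbor: if the player plays `x` and his
neighbor plays `y`, his utility is `-‖x - y‖² - λ·[x = y]`. -/
noncomputable def pairU {d : ℕ} (lam : ℝ) (x y : Fin d → ℤ) : ℝ :=
  -(sqdist x y : ℝ) - lam * (if x = y then 1 else 0)

/-!
A player with no profitable deviation sits at squared distance exactly `1` from the neighbour
he observes: coinciding costs `λ > 1`, while a unit step away costs only `1`. Around the cycle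
the three squared distances would then sum to `3`, but `‖a‖² + ‖b‖² + ‖a + b‖²` is always even.
-/

section SqDist

variable {d : ℕ}

lemma sqdist_nonneg (x y : Fin d → ℤ) : 0 ≤ sqdist x y :=
  sum_nonneg fun _ _ => sq_nonneg _

lemma sqdist_eq_zero_iff {x y : Fin d → ℤ} : sqdist x y = 0 ↔ x = y := by
  simp only [sqdist, sum_eq_zero_iff_of_nonneg fun k _ => sq_nonneg (x k - y k), mem_univ,
    true_implies, sq_eq_zero_iff, sub_eq_zero, funext_iff]

lemma sqdist_add_single_self (y : Fin d → ℤ) (i : Fin d) : sqdist (y + Pi.single i 1) y = 1 := by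
  simp only [sqdist, Pi.add_apply, add_sub_cancel_left]
  rw [sum_eq_single i (fun k _ hk => by simp [hk]) (by simp)]
  simp

lemma even_sqdist_add_sqdist_add_sqdist (x y z : Fin d → ℤ) :
    Even (sqdist x y + sqdist y z + sqdist z x) := by
  simp only [sqdist, ← sum_add_distrib]
  refine even_sum _ fun k _ => ⟨(x k - y k) ^ 2 + (x k - y k) * (y k - z k) + (y k - z k) ^ 2, ?_⟩
  ring

end SqDist

section BestResponse

variable {d : ℕ} {lam : ℝ}

lemma pairU_self (lam : ℝ) (y : Fin d → ℤ) : pairU lam y y = -lam := by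
  simp [pairU, sqdist]

lemma pairU_of_ne {x y : Fin d → ℤ} (h : x ≠ y) : pairU lam x y = -sqdist x y := by
  simp [pairU, h]

def IsBestResponse (lam : ℝ) (x y : Fin d → ℤ) : Prop :=
  ∀ z, pairU lam z y ≤ pairU lam x y

lemma sqdist_eq_one_of_isBestResponse (hd : 0 < d) (hlam : 1 < lam) {x y : Fin d → ℤ}
    (hx : IsBestResponse lam x y) : sqdist x y = 1 := by
  set z := y + Pi.single ⟨0, hd⟩ 1
  have hz : sqdist z y = 1 := sqdist_add_single_self y _
  have hzy : z ≠ y := fun h => one_ne_zero (hz ▸ sqdist_eq_zero_iff.mpr h)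
  have hle := hx z
  rw [pairU_of_ne hzy, hz] at hle
  have hxy : x ≠ y := by
    rintro rfl
    rw [pairU_self] at hle
    push_cast at hle
    linarith
  rw [pairU_of_ne hxy] at hle
  have hpos : 0 < sqdist x y :=
    (sqdist_nonneg x y).lt_of_ne' (mt sqdist_eq_zero_iff.mp hxy)
  have : sqdist x y ≤ 1 := by exact_mod_cast neg_le_neg_iff.mp hle
  omega

end BestResponse

/-- Theorem 2: the three-player cyclic network game (1 observes 2, 2 observes 3,
3 observes 1) with `λ > 1` has no pure strategy Nash equilibrium: for every profile
`(x₁, x₂, x₃)` some player has a unilateral deviation strictly increasing his utility. -/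
theorem no_pure_nash_three_cycle {d : ℕ} (hd : 1 ≤ d) (lam : ℝ) (hlam : 1 < lam)
    (x₁ x₂ x₃ : Fin d → ℤ) :
    (∃ y : Fin d → ℤ, pairU lam x₁ x₂ < pairU lam y x₂) ∨
    (∃ y : Fin d → ℤ, pairU lam x₂ x₃ < pairU lam y x₃) ∨
    (∃ y : Fin d → ℤ, pairU lam x₃ x₁ < pairU lam y x₁) := by
  by_contra! ⟨h₁, h₂, h₃⟩
  have hsum := even_sqdist_add_sqdist_add_sqdist x₁ x₂ x₃
  rw [sqdist_eq_one_of_isBestResponse hd hlam h₁, sqdist_eq_one_of_isBestResponse hd hlam h₂,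
    sqdist_eq_one_of_isBestResponse hd hlam h₃] at hsum
  exact absurd hsum (by decide)
end

section
/- In the network identity-expression game with λ > 1, if player i has exactly one neighbor j (i.e., η(i) = {j}), then in any pure strategy Nash equilibrium X* the strategies satisfy ‖x*_i − x*_j‖² = 1. -/
open Finset

/-- Mean strategy of player `i`'s neighbors, computed coordinatewise in ℝ. -/
noncomputable def nbrMean {N d : ℕ} (η : Fin N → Finset (Fin N))
    (X : Fin N → Fin d → ℤ) (i : Fin N) : Fin d → ℝ :=
  fun k => (∑ j ∈ η i, (X j k : ℝ)) / (η i).card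

/-- Number of `i`'s neighbors adopting the same strategy as `i`. -/
def nTilde {N d : ℕ} (η : Fin N → Finset (Fin N))
    (X : Fin N → Fin d → ℤ) (i : Fin N) : ℕ :=
  ((η i).filter (fun j => X j = X i)).card

/-- Network utility: `u_i(X) = -‖x_i - x̄_{η(i)}‖² - λ ñ_i(X)`. -/
noncomputable def netUtility {N d : ℕ} (lam : ℝ) (η : Fin N → Finset (Fin N))
    (X : Fin N → Fin d → ℤ) (i : Fin N) : ℝ :=
  - sqnorm (fun k => (X i k : ℝ) - nbrMean η X i k) - lam * nTilde η X i

/-!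
A player whose only neighbor is `j` receives utility `-‖x_i - x_j‖²` when `x_i ≠ x_j` and `-λ`
when `x_i = x_j`. Moving to a lattice point at distance one from `x_j` guarantees utility `-1`,
so at an equilibrium `x_i ≠ x_j` (as `λ > 1`) and `0 < ‖x_i - x_j‖² ≤ 1`; integrality forces `1`.
-/

section SqDist

variable {d : ℕ}

lemma sqdist_add_single_one (x : Fin d → ℤ) (k : Fin d) : sqdist (x + Pi.single k 1) x = 1 := by
  simp only [sqdist, Pi.add_apply, add_sub_cancel_left]
  rw [Finset.sum_eq_single k (fun l _ hl => by simp [hl]) (by simp)]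
  simp

lemma cast_sqdist (x y : Fin d → ℤ) :
    (sqdist x y : ℝ) = sqnorm (fun k => (x k : ℝ) - y k) := by
  simp [sqdist, sqnorm]

end SqDist

lemma netUtility_of_neighbors_eq_singleton {N d : ℕ} (lam : ℝ) {η : Fin N → Finset (Fin N)}
    {i j : Fin N} (hij : η i = {j}) (X : Fin N → Fin d → ℤ) :
    netUtility lam η X i = -(sqdist (X i) (X j) : ℝ) - lam * if X j = X i then 1 else 0 := by
  simp only [netUtility, nbrMean, nTilde, hij, Finset.sum_singleton, Finset.card_singleton,
    Nat.cast_one, div_one, Finset.filter_singleton, cast_sqdist]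
  split_ifs <;> simp

theorem nash_single_neighbor_unit_dist_general {N d : ℕ} (hd : 1 ≤ d)
    (η : Fin N → Finset (Fin N))
    (hηirr : ∀ i, i ∉ η i)
    (lam : ℝ) (hlam : 1 < lam)
    (i j : Fin N) (hij : η i = {j})
    (X : Fin N → Fin d → ℤ)
    (hnash : ∀ (i' : Fin N) (x' : Fin d → ℤ),
      netUtility lam η (Function.update X i' x') i' ≤ netUtility lam η X i') :
    sqdist (X i) (X j) = 1 := by
  have hji : j ≠ i := by
    rintro rfl
    exact hηirr j (hij ▸ Finset.mem_singleton_self j)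
  set x' := X j + Pi.single ⟨0, hd⟩ 1
  have hx' : sqdist x' (X j) = 1 := sqdist_add_single_one (X j) _
  have hx'_ne : X j ≠ x' := fun h => by simp [← h, sqdist_eq_zero_iff.2] at hx'
  have hdeviation := hnash i x'
  simp only [netUtility_of_neighbors_eq_singleton lam hij, Function.update_self,
    Function.update_of_ne hji, hx', if_neg hx'_ne, Int.cast_one, mul_zero, sub_zero] at hdeviation
  have hdist_ne : X i ≠ X j := by
    rintro heq
    simp only [heq, if_true, sqdist_eq_zero_iff.2, Int.cast_zero, mul_one] at hdeviation
    linarith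
  rw [if_neg hdist_ne.symm, mul_zero, sub_zero, neg_le_neg_iff] at hdeviation
  have hle : sqdist (X i) (X j) ≤ 1 := by exact_mod_cast hdeviation
  have hpos : sqdist (X i) (X j) ≠ 0 := mt sqdist_eq_zero_iff.1 hdist_ne
  have := sqdist_nonneg (X i) (X j)
  omega

/-- With `λ > 1`, if player `i` has exactly one neighbor `j`, then in any pure strategy
Nash equilibrium `X*` we have `‖x*_i - x*_j‖² = 1`. -/
theorem nash_single_neighbor_unit_dist {N d : ℕ} (hd : 1 ≤ d)
    (η : Fin N → Finset (Fin N))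
    (hηne : ∀ i, (η i).Nonempty) (hηirr : ∀ i, i ∉ η i)
    (lam : ℝ) (hlam : 1 < lam)
    (i j : Fin N) (hij : η i = {j})
    (X : Fin N → Fin d → ℤ)
    (hnash : ∀ (i' : Fin N) (x' : Fin d → ℤ),
      netUtility lam η (Function.update X i' x') i' ≤ netUtility lam η X i') :
    sqdist (X i) (X j) = 1 :=
  nash_single_neighbor_unit_dist_general hd η hηirr lam hlam i j hij X hnash
end
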